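/- Let N be an odd positive integer and let a, b be integers with a coprime to N. Then the Gaussian g : ZMod N → ℂ defined by g k = exp(2πi·(a·k.val² + b·k.val)/N) is biunimodular: ‖g k‖ = 1 for all k, and ‖ĝ c‖ = 1 for all c ∈ ZMod N, where ĝ c = (1/√N) · Σ_{k ∈ ZMod N} exp(2πi·k.val·c.val/N) · g k. -/

import Mathlib

/-!
Writing `q x = A x² + B x`, the squared modulus of `∑ ψ (q x)` is `∑_{x,y} ψ (q x - q y)`.
Putting `x = d + y` gives `q x - q y = q d + 2 A d y`, so the inner sum over `y` is a sum of the
primitive character `y ↦ ψ (2 A d y)`, which vanishes unless `2 A d = 0`. When `2 A` is a unit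
(here: `N` odd and `a` coprime to `N`) only `d = 0` survives and the modulus is `√N`.
-/

open Complex

/-- The unitarily normalized discrete Fourier transform on `ZMod N`. -/
noncomputable def dft1 (N : ℕ) [NeZero N] (f : ZMod N → ℂ) : ZMod N → ℂ :=
  fun c => (1 / Real.sqrt N : ℂ) * ∑ k : ZMod N,
    Complex.exp (2 * Real.pi * Complex.I * (k.val * c.val) / N) * f k

theorem AddChar.norm_sum_quadratic_sq {R : Type*} [CommRing R] [Fintype R] {ψ : AddChar R ℂ}
    (hψ : ψ.IsPrimitive) {A : R} (hA : IsUnit (2 * A)) (B : R) :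
    ‖∑ x, ψ (A * x ^ 2 + B * x)‖ ^ 2 = Fintype.card R := by
  classical
  set q : R → R := fun x ↦ A * x ^ 2 + B * x
  have hdiff (d y : R) : q (d + y) - q y = q d + y * (2 * A * d) := by simp only [q]; ring
  have hinner (d : R) : ∑ y, ψ (q (d + y) - q y) = if d = 0 then (Fintype.card R : ℂ) else 0 := by
    simp_rw [hdiff, AddChar.map_add_eq_mul, ← Finset.mul_sum, AddChar.sum_mulShift _ hψ,
      hA.mul_right_eq_zero]
    split_ifs with hd <;> simp [hd, q]
  have key : ((‖∑ x, ψ (q x)‖ ^ 2 : ℝ) : ℂ) = Fintype.card R := by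
    calc ((‖∑ x, ψ (q x)‖ ^ 2 : ℝ) : ℂ)
        = ∑ y, ∑ x, ψ (q x - q y) := by
          rw [ofReal_pow, ← mul_conj', map_sum, Finset.sum_mul_sum, Finset.sum_comm]
          simp_rw [sub_eq_add_neg, AddChar.map_add_eq_mul, AddChar.map_neg_eq_conj]
      _ = ∑ d, ∑ y, ψ (q (d + y) - q y) := by
          conv_rhs => rw [Finset.sum_comm]
          exact Fintype.sum_congr _ _ fun y ↦
            (Fintype.sum_equiv (Equiv.addRight y) _ _ fun d ↦ rfl).symm
      _ = Fintype.card R := by simp_rw [hinner, Finset.sum_ite_eq', Finset.mem_univ, if_true]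
  exact_mod_cast key

theorem AddChar.norm_sum_quadratic {R : Type*} [CommRing R] [Fintype R] {ψ : AddChar R ℂ}
    (hψ : ψ.IsPrimitive) {A : R} (hA : IsUnit (2 * A)) (B : R) :
    ‖∑ x, ψ (A * x ^ 2 + B * x)‖ = √(Fintype.card R) := by
  rw [← norm_sum_quadratic_sq hψ hA B, Real.sqrt_sq (norm_nonneg _)]

namespace ZMod

theorem isUnit_two_mul_intCast {N : ℕ} (hodd : Odd N) {a : ℤ} (ha : IsCoprime a N) :
    IsUnit (2 * (a : ZMod N)) := by
  refine IsUnit.mul ?_ ((coe_int_isUnit_iff_isCoprime a N).mpr ha.symm)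
  exact_mod_cast (isUnit_iff_coprime 2 N).mpr (Nat.coprime_two_left.mpr hodd)

variable {N : ℕ} [NeZero N]

theorem exp_val_mul_val (k c : ZMod N) :
    exp (2 * Real.pi * I * (k.val * c.val) / N) = stdAddChar (k * c) := by
  have := stdAddChar_coe (N := N) ((k.val * c.val : ℕ) : ℤ)
  push_cast [natCast_val, cast_id] at this
  simpa using this.symm

theorem exp_quadratic_val (a b : ℤ) (k : ZMod N) :
    exp (2 * Real.pi * I * ((a : ℂ) * (k.val : ℂ) ^ 2 + (b : ℂ) * k.val) / N) =
      stdAddChar ((a : ZMod N) * k ^ 2 + (b : ZMod N) * k) := by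
  have := stdAddChar_coe (N := N) (a * (k.val : ℤ) ^ 2 + b * k.val)
  push_cast [natCast_val, cast_id] at this
  simpa using this.symm

end ZMod

theorem stmt_16_general (N : ℕ) [NeZero N] (hodd : Odd N) (a b : ℤ)
    (ha : IsCoprime a (N : ℤ))
    (g : ZMod N → ℂ)
    (hg : ∀ k : ZMod N, g k =
      Complex.exp (2 * Real.pi * Complex.I * ((a : ℂ) * (k.val : ℂ) ^ 2 + (b : ℂ) * k.val) / N)) :
    (∀ k : ZMod N, ‖g k‖ = 1) ∧ (∀ c : ZMod N, ‖dft1 N g c‖ = 1) := by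
  simp_rw [ZMod.exp_quadratic_val] at hg
  refine ⟨fun k ↦ by rw [hg]; exact AddChar.norm_apply _ _, fun c ↦ ?_⟩
  have hsummand (k : ZMod N) : exp (2 * Real.pi * I * (k.val * c.val) / N) * g k =
      ZMod.stdAddChar ((a : ZMod N) * k ^ 2 + ((b : ZMod N) + c) * k) := by
    rw [hg, ZMod.exp_val_mul_val, ← AddChar.map_add_eq_mul]
    ring_nf
  have hsqrt : (0 : ℝ) < √N := Real.sqrt_pos.mpr (Nat.cast_pos.mpr (NeZero.pos N))
  rw [dft1, Finset.sum_congr rfl fun k _ ↦ hsummand k, norm_mul,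
    AddChar.norm_sum_quadratic (ZMod.isPrimitive_stdAddChar N) (ZMod.isUnit_two_mul_intCast hodd ha),
    ZMod.card, one_div, norm_inv, norm_real, Real.norm_of_nonneg hsqrt.le, inv_mul_cancel₀ hsqrt.ne']

/-- For odd `N` and `a` coprime to `N`, the Gaussian
`g k = exp(2πi(a k² + b k)/N)` is biunimodular. -/
theorem stmt_16 (N : ℕ) [NeZero N] (hN : 0 < N) (hodd : Odd N) (a b : ℤ)
    (ha : IsCoprime a (N : ℤ))
    (g : ZMod N → ℂ)
    (hg : ∀ k : ZMod N, g k =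
      Complex.exp (2 * Real.pi * Complex.I * ((a : ℂ) * (k.val : ℂ) ^ 2 + (b : ℂ) * k.val) / N)) :
    (∀ k : ZMod N, ‖g k‖ = 1) ∧ (∀ c : ZMod N, ‖dft1 N g c‖ = 1) :=
  stmt_16_general N hodd a b ha g hg
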